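/- arXiv:math/0607360 — 2 statements merged into one kernel-verified Lean document; each statement's English description precedes it below -/
import Mathlib

section
/- In the local model, for all indices i, j and every point (x,y) ∈ U × ℝⁿ, the Lie bracket of adapted frame fields satisfies [X_i, X_j](x,y) = Σ_{r,m} y^r K_{jir}{}^m(x) X_{m̄}(x,y). -/
open scoped BigOperators

namespace TangentLift

/-- A point of the tangent bundle `TU = U × ℝⁿ` in coordinates `(x, y)`. -/
abbrev Pt (n : ℕ) := (Fin n → ℝ) × (Fin n → ℝ)

variable {n : ℕ}

/-- Partial derivative `∂_i f` of a function on `ℝⁿ`. -/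
noncomputable def pd (i : Fin n) (f : (Fin n → ℝ) → ℝ) (x : Fin n → ℝ) : ℝ :=
  fderiv ℝ f x (Pi.single i 1)

/-- The Christoffel symbols `Γ^k_{ij}` of a metric `g` given in coordinates. -/
noncomputable def Gam (g : (Fin n → ℝ) → Matrix (Fin n) (Fin n) ℝ)
    (k i j : Fin n) (x : Fin n → ℝ) : ℝ :=
  (1 / 2) * ∑ m, (g x)⁻¹ k m *
    (pd i (fun z => g z m j) x + pd j (fun z => g z m i) x - pd m (fun z => g z i j) x)

/-- The curvature tensor `K_{ijk}{}^m` of the metric `g`. -/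
noncomputable def Curv (g : (Fin n → ℝ) → Matrix (Fin n) (Fin n) ℝ)
    (i j k m : Fin n) (x : Fin n → ℝ) : ℝ :=
  pd i (Gam g m j k) x - pd j (Gam g m i k) x
    + ∑ a, (Gam g m i a x * Gam g a j k x - Gam g m j a x * Gam g a i k x)

/-- The horizontal adapted frame field `X_h(x,y) = ∂/∂x^h − Σ_{a,m} y^a Γ^m_{ah}(x) ∂/∂y^m`. -/
noncomputable def XH (g : (Fin n → ℝ) → Matrix (Fin n) (Fin n) ℝ) (h : Fin n) (p : Pt n) :
    Pt n :=
  (Pi.single h 1, fun m => -∑ a, p.2 a * Gam g m a h p.1)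

/-- The vertical adapted frame field `X_h̄(x,y) = ∂/∂y^h`. -/
noncomputable def XV (h : Fin n) (_p : Pt n) : Pt n := (0, Pi.single h 1)

/-- Lie bracket of vector fields on `U × ℝⁿ`: `[V,W](p) = DW(p)(V(p)) − DV(p)(W(p))`. -/
noncomputable def lie (V W : Pt n → Pt n) (p : Pt n) : Pt n :=
  fderiv ℝ W p (V p) - fderiv ℝ V p (W p)

/-- Directional derivative of a function on `TU` along the vector field `Z`. -/
noncomputable def dirD (Z : Pt n → Pt n) (f : Pt n → ℝ) (p : Pt n) : ℝ :=
  fderiv ℝ f p (Z p)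

/-- The vertical components of a tangent vector `v` at `p` in the adapted frame,
i.e. the coefficients of the `X_m̄` in the expansion of `v`. -/
noncomputable def ver (g : (Fin n → ℝ) → Matrix (Fin n) (Fin n) ℝ) (p : Pt n) (v : Pt n) :
    Fin n → ℝ :=
  fun m => v.2 m + ∑ a, ∑ i, p.2 a * Gam g m a i p.1 * v.1 i

/-- The bilinear-form field `g₁` on `TU`: `g₁(X_i,X_j) = g_{ij}`, vanishing on vertical
arguments. -/
noncomputable def g1 (g : (Fin n → ℝ) → Matrix (Fin n) (Fin n) ℝ) (p : Pt n) (v w : Pt n) : ℝ :=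
  ∑ i, ∑ j, g p.1 i j * v.1 i * w.1 j

/-- The bilinear-form field `g₂` on `TU`: `g₂(X_i,X_j̄) = g₂(X_j̄,X_i) = g_{ij}`, vanishing on
two horizontal or two vertical arguments. -/
noncomputable def g2 (g : (Fin n → ℝ) → Matrix (Fin n) (Fin n) ℝ) (p : Pt n) (v w : Pt n) : ℝ :=
  ∑ i, ∑ j, g p.1 i j * (v.1 i * ver g p w j + w.1 i * ver g p v j)

/-- The bilinear-form field `g₃` on `TU`: `g₃(X_ī,X_j̄) = g_{ij}`, vanishing on horizontal
arguments. -/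
noncomputable def g3 (g : (Fin n → ℝ) → Matrix (Fin n) (Fin n) ℝ) (p : Pt n) (v w : Pt n) : ℝ :=
  ∑ i, ∑ j, g p.1 i j * ver g p v i * ver g p w j

/-- The lift metric `g̃ = a g₁ + b g₂ + c g₃` on `TU`. -/
noncomputable def gLift (g : (Fin n → ℝ) → Matrix (Fin n) (Fin n) ℝ) (a b c : ℝ)
    (p : Pt n) (v w : Pt n) : ℝ :=
  a * g1 g p v w + b * g2 g p v w + c * g3 g p v w

/-- Lie derivative of a field `S` of bilinear forms along the vector field `X`, evaluated on
the vector fields `V`, `W` at the point `p`: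
`(L_X S)(V,W) = X·(S(V,W)) − S([X,V],W) − S(V,[X,W])`. -/
noncomputable def lieDer (X : Pt n → Pt n) (S : Pt n → Pt n → Pt n → ℝ)
    (V W : Pt n → Pt n) (p : Pt n) : ℝ :=
  dirD X (fun q => S q (V q) (W q)) p - S p (lie X V p) (W p) - S p (V p) (lie X W p)

/-- `g` is a Riemannian metric on `U` given in coordinates: each component is smooth on `U`,
and at each point of `U` the matrix `(g_{ij})` is symmetric positive definite. -/
def IsMetric (U : Set (Fin n → ℝ)) (g : (Fin n → ℝ) → Matrix (Fin n) (Fin n) ℝ) : Prop :=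
  (∀ i j, ContDiffOn ℝ (⊤ : ℕ∞) (fun x => g x i j) U) ∧
    (∀ x ∈ U, (g x).IsSymm) ∧ (∀ x ∈ U, (g x).PosDef)

/-- The vector field `X = Σ_h X^h X_h + Σ_h X^h̄ X_h̄` on `TU` with the given components in
the adapted frame; for a fiber-preserving field the `X^h` are functions of `x` alone. -/
noncomputable def mkVF (g : (Fin n → ℝ) → Matrix (Fin n) (Fin n) ℝ)
    (Xh' : Fin n → (Fin n → ℝ) → ℝ) (Xv' : Fin n → Pt n → ℝ) (p : Pt n) : Pt n :=
  (∑ h, Xh' h p.1 • XH g h p) + ∑ h, Xv' h p • XV h p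

/-- Smoothness of the components of a fiber-preserving vector field on `TU`. -/
def SmoothComponents (U : Set (Fin n → ℝ)) (Xh' : Fin n → (Fin n → ℝ) → ℝ)
    (Xv' : Fin n → Pt n → ℝ) : Prop :=
  (∀ h, ContDiffOn ℝ (⊤ : ℕ∞) (Xh' h) U) ∧ (∀ h, ContDiffOn ℝ (⊤ : ℕ∞) (Xv' h) (U ×ˢ Set.univ))

/-- `X` is a conformal vector field for the lift metric `g̃ = a g₁ + b g₂ + c g₃` with
conformal factor `Ω`, i.e. `L_X g̃ = 2 Ω g̃` as fields of bilinear forms on `TU`, tested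
against all smooth vector fields on `TU`. -/
def Conformal (U : Set (Fin n → ℝ)) (g : (Fin n → ℝ) → Matrix (Fin n) (Fin n) ℝ)
    (a b c : ℝ) (X : Pt n → Pt n) (Ω : Pt n → ℝ) : Prop :=
  ∀ V W : Pt n → Pt n, ContDiffOn ℝ (⊤ : ℕ∞) V (U ×ˢ Set.univ) → ContDiffOn ℝ (⊤ : ℕ∞) W (U ×ˢ Set.univ) →
    ∀ p : Pt n, p.1 ∈ U →
      lieDer X (gLift g a b c) V W p = 2 * Ω p * gLift g a b c p (V p) (W p)

/-- The components `(L_V g)_{ij}` of the Lie derivative of `g` along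
`V = Σ_h V^h ∂/∂x^h` on `U`. -/
noncomputable def lieG (g : (Fin n → ℝ) → Matrix (Fin n) (Fin n) ℝ)
    (Vf : Fin n → (Fin n → ℝ) → ℝ) (i j : Fin n) (x : Fin n → ℝ) : ℝ :=
  ∑ a, (Vf a x * pd a (fun z => g z i j) x + pd i (Vf a) x * g x a j + pd j (Vf a) x * g x i a)

/-- The covariant derivative `∇_i V^m = ∂_i V^m + Σ_a Γ^m_{ia} V^a`. -/
noncomputable def covD (g : (Fin n → ℝ) → Matrix (Fin n) (Fin n) ℝ)
    (Vf : Fin n → (Fin n → ℝ) → ℝ) (i m : Fin n) (x : Fin n → ℝ) : ℝ :=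
  pd i (Vf m) x + ∑ a, Gam g m i a x * Vf a x

/-- The complete lift `X^C = Σ_h V^h X_h + Σ_{h,m} y^m (Σ_a Γ^h_{ma} V^a + ∂_m V^h) X_h̄`
of the vector field `V = Σ_h V^h ∂/∂x^h` on `U`. -/
noncomputable def completeLift (g : (Fin n → ℝ) → Matrix (Fin n) (Fin n) ℝ)
    (Vf : Fin n → (Fin n → ℝ) → ℝ) (p : Pt n) : Pt n :=
  (∑ h, Vf h p.1 • XH g h p)
    + ∑ h, (∑ m, p.2 m * ((∑ a, Gam g h m a p.1 * Vf a p.1) + pd m (Vf h) p.1)) • XV h p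

/-- The vertical lift `X^V = Σ_h V^h X_h̄` of `V = Σ_h V^h ∂/∂x^h`. -/
noncomputable def vertLift (Vf : Fin n → (Fin n → ℝ) → ℝ) (p : Pt n) : Pt n :=
  ∑ h, Vf h p.1 • XV h p

/-- The horizontal lift `X^H = Σ_h V^h X_h` of `V = Σ_h V^h ∂/∂x^h`. -/
noncomputable def horLift (g : (Fin n → ℝ) → Matrix (Fin n) (Fin n) ℝ)
    (Vf : Fin n → (Fin n → ℝ) → ℝ) (p : Pt n) : Pt n :=
  ∑ h, Vf h p.1 • XH g h p

section Aux

variable {n : ℕ}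

lemma diffAt_det {M : (Fin n → ℝ) → Matrix (Fin n) (Fin n) ℝ} {x : Fin n → ℝ}
    (h : ∀ k l, DifferentiableAt ℝ (fun z => M z k l) x) :
    DifferentiableAt ℝ (fun z => (M z).det) x := by
  simp only [Matrix.det_apply']
  exact DifferentiableAt.fun_sum fun σ _ => DifferentiableAt.const_mul
    ((HasFDerivAt.finset_prod (fun l _ => (h (σ l) l).hasFDerivAt)).differentiableAt) _

lemma diffAt_inv_entry {g : (Fin n → ℝ) → Matrix (Fin n) (Fin n) ℝ} {x : Fin n → ℝ}
    (h : ∀ k l, DifferentiableAt ℝ (fun z => g z k l) x)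
    (hdet : (g x).det ≠ 0) (k m : Fin n) :
    DifferentiableAt ℝ (fun z => (g z)⁻¹ k m) x := by
  simp only [Matrix.inv_def, Matrix.smul_apply, smul_eq_mul, Ring.inverse_eq_inv']
  apply DifferentiableAt.mul
  · exact (diffAt_det h).inv hdet
  · simp only [Matrix.adjugate_apply]
    apply diffAt_det
    intro a b
    by_cases hab : a = m
    · simp [Matrix.updateRow_apply, hab]
    · simpa [Matrix.updateRow_apply, hab] using h a b

lemma pd_congr {x : Fin n → ℝ} {f f' : (Fin n → ℝ) → ℝ} (h : f =ᶠ[nhds x] f') (m : Fin n) :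
    pd m f x = pd m f' x := by
  unfold pd; rw [h.fderiv_eq]

lemma diffAt_pd {x : Fin n → ℝ} {f : (Fin n → ℝ) → ℝ} (h : ContDiffAt ℝ (⊤ : ℕ∞) f x) (i : Fin n) :
    DifferentiableAt ℝ (pd i f) x := by
  unfold pd
  exact ((h.fderiv_right (m := 1) (by exact WithTop.coe_le_coe.mpr (le_top : ((1 + 1 : ℕ) : ℕ∞) ≤ ⊤))).clm_apply contDiffAt_const).differentiableAt (by simp)

section Metric

variable {U : Set (Fin n → ℝ)} {g : (Fin n → ℝ) → Matrix (Fin n) (Fin n) ℝ}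
  (hU : IsOpen U) (hg : IsMetric U g) {x : Fin n → ℝ} (hx : x ∈ U)

include hU hg hx

lemma entry_contDiffAt (k l : Fin n) : ContDiffAt ℝ (⊤ : ℕ∞) (fun z => g z k l) x :=
  (hg.1 k l).contDiffAt (hU.mem_nhds hx)

lemma diffAt_Gam (k i j : Fin n) : DifferentiableAt ℝ (Gam g k i j) x := by
  have hentry : ∀ a b, DifferentiableAt ℝ (fun z => g z a b) x := fun a b =>
    (entry_contDiffAt hU hg hx a b).differentiableAt (by simp)
  have hdet : (g x).det ≠ 0 := ne_of_gt (hg.2.2 x hx).det_pos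
  unfold Gam
  apply DifferentiableAt.const_mul
  apply DifferentiableAt.fun_sum
  intro m _
  exact (diffAt_inv_entry hentry hdet k m).mul
    (((diffAt_pd (entry_contDiffAt hU hg hx m j) i).add
      (diffAt_pd (entry_contDiffAt hU hg hx m i) j)).sub
      (diffAt_pd (entry_contDiffAt hU hg hx i j) m))

lemma Gam_symm (k a b : Fin n) : Gam g k a b x = Gam g k b a x := by
  have hev : (fun z => g z a b) =ᶠ[nhds x] (fun z => g z b a) := by
    filter_upwards [hU.mem_nhds hx] with z hz using (hg.2.1 z hz).apply b a
  unfold Gam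
  congr 1
  refine Finset.sum_congr rfl fun m _ => ?_
  rw [pd_congr hev m]
  ring

lemma pd_Gam_symm (l k a b : Fin n) : pd l (Gam g k a b) x = pd l (Gam g k b a) x :=
  pd_congr (by filter_upwards [hU.mem_nhds hx] with z hz using Gam_symm hU hg hz k a b) l

end Metric

lemma fderiv_XH_apply (g : (Fin n → ℝ) → Matrix (Fin n) (Fin n) ℝ) (h : Fin n) (p v : Pt n)
    (hG : ∀ m a, DifferentiableAt ℝ (Gam g m a h) p.1) :
    fderiv ℝ (XH g h) p v =
      (0, fun m => -∑ a, (p.2 a • (fderiv ℝ (Gam g m a h) p.1 v.1)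
        + Gam g m a h p.1 • v.2 a)) := by
  have hcomp : ∀ m, HasFDerivAt (fun q : Pt n => (XH g h q).2 m)
      (-∑ a, ((fun q : Pt n => q.2 a) p • ((fderiv ℝ (Gam g m a h) p.1).comp
          (ContinuousLinearMap.fst ℝ (Fin n → ℝ) (Fin n → ℝ)))
        + (fun q : Pt n => Gam g m a h q.1) p •
          ((ContinuousLinearMap.proj a).comp
            (ContinuousLinearMap.snd ℝ (Fin n → ℝ) (Fin n → ℝ))))) p := by
    intro m
    apply HasFDerivAt.neg
    apply HasFDerivAt.fun_sum
    intro a _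
    exact HasFDerivAt.mul
      (((ContinuousLinearMap.proj a).comp
        (ContinuousLinearMap.snd ℝ (Fin n → ℝ) (Fin n → ℝ))).hasFDerivAt)
      ((hG m a).hasFDerivAt.comp p hasFDerivAt_fst)
  have H : HasFDerivAt (XH g h)
      (ContinuousLinearMap.prod 0 (ContinuousLinearMap.pi fun m =>
        (-∑ a, ((fun q : Pt n => q.2 a) p • ((fderiv ℝ (Gam g m a h) p.1).comp
          (ContinuousLinearMap.fst ℝ (Fin n → ℝ) (Fin n → ℝ)))
        + (fun q : Pt n => Gam g m a h q.1) p •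
          ((ContinuousLinearMap.proj a).comp
            (ContinuousLinearMap.snd ℝ (Fin n → ℝ) (Fin n → ℝ))))))) p := by
    exact HasFDerivAt.prodMk (hasFDerivAt_const _ _) (hasFDerivAt_pi.mpr hcomp)
  rw [H.fderiv]
  ext m
  · simp
  · simp [ContinuousLinearMap.pi_apply, ContinuousLinearMap.smul_apply,
      ContinuousLinearMap.sum_apply, ContinuousLinearMap.comp_apply]

lemma scalar_key {n : ℕ} (y : Fin n → ℝ) (A : Fin n → Fin n → Fin n → ℝ)
    (D : Fin n → Fin n → Fin n → Fin n → ℝ)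
    (hA : ∀ k a b, A k a b = A k b a) (hD : ∀ l k a b, D l k a b = D l k b a) (i j m : Fin n) :
    (-∑ a, (y a * D i m a j + A m a j * (-∑ b, y b * A a b i)))
      - (-∑ a, (y a * D j m a i + A m a i * (-∑ b, y b * A a b j)))
    = ∑ r, y r * (D j m i r - D i m j r + ∑ a, (A m j a * A a i r - A m i a * A a j r)) := by
  have hrw : ∀ r, y r * (D j m i r - D i m j r + ∑ a, (A m j a * A a i r - A m i a * A a j r))
      = y r * D j m r i - y r * D i m r j
        + ∑ a, (y r * (A m a j * A a r i) - y r * (A m a i * A a r j)) := by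
    intro r
    rw [show (∑ a, (A m j a * A a i r - A m i a * A a j r))
        = ∑ a, (A m a j * A a r i - A m a i * A a r j) from
      Finset.sum_congr rfl fun a _ => by rw [hA m j a, hA a i r, hA m i a, hA a j r],
      hD j m i r, hD i m j r, mul_add, mul_sub, Finset.mul_sum]
    simp only [mul_sub]
  rw [Finset.sum_congr rfl fun r _ => hrw r]
  simp only [mul_neg, neg_neg, Finset.mul_sum, Finset.sum_add_distrib, Finset.sum_sub_distrib,
    Finset.sum_neg_distrib, sub_neg_eq_add, neg_add_rev, sub_eq_add_neg, neg_neg]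
  rw [show (∑ r, ∑ a, y r * (A m a j * A a r i)) = ∑ a, ∑ r, y r * (A m a j * A a r i) from
      Finset.sum_comm,
    show (∑ r, ∑ a, y r * (A m a i * A a r j)) = ∑ a, ∑ r, y r * (A m a i * A a r j) from
      Finset.sum_comm]
  have h1 : ∀ a, ∑ b, A m a j * (y b * A a b i) = ∑ r, y r * (A m a j * A a r i) :=
    fun a => Finset.sum_congr rfl fun b _ => by ring
  have h2 : ∀ a, ∑ b, A m a i * (y b * A a b j) = ∑ r, y r * (A m a i * A a r j) :=
    fun a => Finset.sum_congr rfl fun b _ => by ring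
  simp only [Finset.sum_congr rfl fun a _ => h1 a, Finset.sum_congr rfl fun a _ => h2 a]
  abel

end Aux

/-- `[X_i, X_j](x,y) = Σ_{r,m} y^r K_{jir}{}^m(x) X_m̄(x,y)` for all
`(x,y) ∈ U × ℝⁿ`. -/
theorem lie_horizontal_horizontal (n : ℕ) (hn : 1 ≤ n) (U : Set (Fin n → ℝ)) (hU : IsOpen U)
    (g : (Fin n → ℝ) → Matrix (Fin n) (Fin n) ℝ) (hg : IsMetric U g)
    (i j : Fin n) (p : Pt n) (hp : p.1 ∈ U) :
    lie (XH g i) (XH g j) p = ∑ r, ∑ m, (p.2 r * Curv g j i r m p.1) • XV m p := by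
  have hGj : ∀ m a, DifferentiableAt ℝ (Gam g m a j) p.1 := fun m a => diffAt_Gam hU hg hp m a j
  have hGi : ∀ m a, DifferentiableAt ℝ (Gam g m a i) p.1 := fun m a => diffAt_Gam hU hg hp m a i
  unfold lie
  rw [fderiv_XH_apply g j p (XH g i p) hGj, fderiv_XH_apply g i p (XH g j p) hGi]
  ext m
  · simp [XV, Prod.fst_sum]
  · simp only [Prod.snd_sub, Pi.sub_apply, XH, XV, smul_eq_mul, Prod.snd_sum,
      Finset.sum_apply, Prod.smul_snd, Pi.smul_apply, Pi.single_apply, mul_ite, mul_one,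
      mul_zero, Finset.sum_ite_eq', Finset.sum_ite_eq, Finset.mem_univ, if_true, Curv]
    exact scalar_key p.2 (fun k a b => Gam g k a b p.1)
      (fun l k a b => fderiv ℝ (Gam g k a b) p.1 (Pi.single l 1))
      (fun k a b => Gam_symm hU hg hp k a b)
      (fun l k a b => pd_Gam_symm hU hg hp l k a b) i j m

end TangentLift
end

section
/- In the local model, let X = Σ_h X^h X_h + Σ_h X^{h̄} X_{h̄} be a fiber-preserving vector field on TU inducing V = Σ_h X^h ∂/∂x^h on U. Write C_i^m = Σ_{b,c} y^b X^c K_{icb}{}^m − Σ_b X^{b̄} Γ^m_{bi} − X_i(X^{m̄}). Then the Lie derivative of g₂ along X satisfies, for all i, j: (L_X g₂)(X_i, X_j) = −Σ_m ( g_{jm} C_i^m + g_{im} C_j^m ), (L_X g₂)(X_{ī}, X_j) = (L_V g)_{ij} − Σ_m g_{jm} ∇_i V^m + Σ_m g_{jm} ∂X^{m̄}/∂y^i, and (L_X g₂)(X_{ī}, X_{j̄}) = 0. -/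
open scoped BigOperators

namespace TangentLift

variable {n : ℕ}

section Helpers

variable {n : ℕ}

lemma sum_single_mul (u : Fin n → ℝ) (j : Fin n) :
    (∑ k, u k • (Pi.single k 1 : Fin n → ℝ)) j = u j := by
  simp [Finset.sum_apply, Pi.single_apply]

lemma fderiv_apply_pd (f : (Fin n → ℝ) → ℝ) (x : Fin n → ℝ) (u : Fin n → ℝ) :
    fderiv ℝ f x u = ∑ k, u k * pd k f x := by
  have hu : u = ∑ k, u k • (Pi.single k 1 : Fin n → ℝ) := by
    ext j; rw [sum_single_mul]
  conv_lhs => rw [hu]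
  rw [map_sum]
  exact Finset.sum_congr rfl fun k _ => by rw [map_smul]; rfl

lemma sum_single_mul' (i : Fin n) (F : Fin n → ℝ) :
    ∑ k, (Pi.single i 1 : Fin n → ℝ) k * F k = F i := by
  simp [Pi.single_apply]

lemma diff_comp_fst {f : (Fin n → ℝ) → ℝ} {p : Pt n} (hf : DifferentiableAt ℝ f p.1) :
    DifferentiableAt ℝ (fun q : Pt n => f q.1) p :=
  hf.comp p differentiableAt_fst

lemma fderiv_comp_fst {f : (Fin n → ℝ) → ℝ} {p : Pt n} (hf : DifferentiableAt ℝ f p.1)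
    (v : Pt n) : fderiv ℝ (fun q : Pt n => f q.1) p v = ∑ k, v.1 k * pd k f p.1 := by
  rw [show (fun q : Pt n => f q.1) = f ∘ Prod.fst from rfl,
    (hf.hasFDerivAt.comp p hasFDerivAt_fst).fderiv]
  exact fderiv_apply_pd f p.1 v.1

lemma diff_snd_app {p : Pt n} (a : Fin n) :
    DifferentiableAt ℝ (fun q : Pt n => q.2 a) p :=
  (differentiableAt_apply (𝕜 := ℝ) a (f := p.2)).comp p differentiableAt_snd

lemma fderiv_snd_app {p : Pt n} (a : Fin n) (v : Pt n) :
    fderiv ℝ (fun q : Pt n => q.2 a) p v = v.2 a := by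
  rw [show (fun q : Pt n => q.2 a) = (fun w : Fin n → ℝ => w a) ∘ Prod.snd from rfl,
    ((hasFDerivAt_apply (𝕜 := ℝ) a p.2).comp p hasFDerivAt_snd).fderiv]
  rfl

end Helpers

section Smooth

variable {n : ℕ} {U : Set (Fin n → ℝ)} {g : (Fin n → ℝ) → Matrix (Fin n) (Fin n) ℝ}
  {x : Fin n → ℝ}

lemma gdiff (hU : IsOpen U) (hg : IsMetric U g) (hx : x ∈ U) (i j : Fin n) :
    DifferentiableAt ℝ (fun z => g z i j) x :=
  ((hg.1 i j).contDiffAt (hU.mem_nhds hx)).differentiableAt (by simp)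

lemma gpdiff (hU : IsOpen U) (hg : IsMetric U g) (hx : x ∈ U) (a i j : Fin n) :
    DifferentiableAt ℝ (fun z => pd a (fun w => g w i j) z) x := by
  have h1 : ContDiffOn ℝ (⊤ : ℕ∞) (fun z => fderiv ℝ (fun w => g w i j) z) U :=
    (hg.1 i j).fderiv_of_isOpen hU (by simp)
  have h2 : ContDiffOn ℝ (⊤ : ℕ∞) (fun z => fderiv ℝ (fun w => g w i j) z (Pi.single a 1)) U :=
    h1.clm_apply contDiffOn_const
  exact (h2.contDiffAt (hU.mem_nhds hx)).differentiableAt (by simp)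

lemma diff_finset_prod {ι : Type*} [DecidableEq ι] {s : Finset ι}
    {f : ι → (Fin n → ℝ) → ℝ} (h : ∀ i ∈ s, DifferentiableAt ℝ (f i) x) :
    DifferentiableAt ℝ (fun y => ∏ i ∈ s, f i y) x :=
  (HasFDerivAt.finset_prod (fun i hi => (h i hi).hasFDerivAt)).differentiableAt

lemma detdiff (hU : IsOpen U) (hg : IsMetric U g) (hx : x ∈ U) :
    DifferentiableAt ℝ (fun z => (g z).det) x := by
  have h : (fun z => (g z).det)
      = fun z => ∑ σ : Equiv.Perm (Fin n),
          (Equiv.Perm.sign σ : ℤ) * ∏ i, g z (σ i) i := by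
    funext z; rw [Matrix.det_apply']
  rw [h]
  refine DifferentiableAt.fun_sum fun σ _ => ?_
  exact (diff_finset_prod fun i _ => gdiff hU hg hx (σ i) i).const_mul _

lemma adjdiff (hU : IsOpen U) (hg : IsMetric U g) (hx : x ∈ U) (k m : Fin n) :
    DifferentiableAt ℝ (fun z => (g z).adjugate k m) x := by
  have h : (fun z => (g z).adjugate k m)
      = fun z => ∑ σ : Equiv.Perm (Fin n), (Equiv.Perm.sign σ : ℤ) *
          ∏ i, ((g z).updateRow m (Pi.single k 1)) (σ i) i := by
    funext z; rw [Matrix.adjugate_apply, Matrix.det_apply']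
  rw [h]
  refine DifferentiableAt.fun_sum fun σ _ => ?_
  refine DifferentiableAt.const_mul ?_ _
  refine diff_finset_prod fun i _ => ?_
  simp only [Matrix.updateRow_apply]
  split_ifs
  · exact differentiableAt_const _
  · exact gdiff hU hg hx (σ i) i

lemma inv_entry (A : Matrix (Fin n) (Fin n) ℝ) (k m : Fin n) :
    A⁻¹ k m = (A.det)⁻¹ * A.adjugate k m := by
  rw [Matrix.inv_def, Ring.inverse_eq_inv, Matrix.smul_apply, smul_eq_mul]

lemma ginvdiff (hU : IsOpen U) (hg : IsMetric U g) (hx : x ∈ U) (k m : Fin n) :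
    DifferentiableAt ℝ (fun z => (g z)⁻¹ k m) x := by
  have h : (fun z => (g z)⁻¹ k m) = fun z => ((g z).det)⁻¹ * (g z).adjugate k m := by
    funext z; exact inv_entry _ _ _
  rw [h]
  exact ((detdiff hU hg hx).inv (hg.2.2 x hx).det_pos.ne').mul (adjdiff hU hg hx k m)

lemma Gamdiff (hU : IsOpen U) (hg : IsMetric U g) (hx : x ∈ U) (k i j : Fin n) :
    DifferentiableAt ℝ (Gam g k i j) x := by
  unfold Gam
  refine DifferentiableAt.const_mul ?_ _
  refine DifferentiableAt.fun_sum fun m _ => ?_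
  exact (ginvdiff hU hg hx k m).mul
    (((gpdiff hU hg hx i m j).add (gpdiff hU hg hx j m i)).sub (gpdiff hU hg hx m i j))

end Smooth

section Symm

variable {n : ℕ} {U : Set (Fin n → ℝ)} {g : (Fin n → ℝ) → Matrix (Fin n) (Fin n) ℝ}
  {x : Fin n → ℝ}

lemma g_symm (hg : IsMetric U g) (hx : x ∈ U) (i j : Fin n) : g x i j = g x j i :=
  ((hg.2.1 x hx).apply i j : g x j i = g x i j).symm

lemma pd_congr_on (hU : IsOpen U) (hx : x ∈ U) {f f' : (Fin n → ℝ) → ℝ}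
    (h : ∀ z ∈ U, f z = f' z) (a : Fin n) : pd a f x = pd a f' x := by
  have he : f =ᶠ[nhds x] f' := Filter.eventuallyEq_of_mem (hU.mem_nhds hx) h
  unfold pd
  rw [he.fderiv_eq]

lemma pd_g_symm (hU : IsOpen U) (hg : IsMetric U g) (hx : x ∈ U) (a i j : Fin n) :
    pd a (fun z => g z i j) x = pd a (fun z => g z j i) x :=
  pd_congr_on hU hx (fun z hz => g_symm hg hz i j) a

lemma Gam_symm_s8 (hU : IsOpen U) (hg : IsMetric U g) (hx : x ∈ U) (k i j : Fin n) :
    Gam g k i j x = Gam g k j i x := by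
  unfold Gam
  congr 1
  refine Finset.sum_congr rfl fun m _ => ?_
  rw [pd_g_symm hU hg hx m i j]
  ring

lemma pd_Gam_symm_s8 (hU : IsOpen U) (hg : IsMetric U g) (hx : x ∈ U) (c k i j : Fin n) :
    pd c (Gam g k i j) x = pd c (Gam g k j i) x :=
  pd_congr_on hU hx (fun z hz => Gam_symm_s8 hU hg hz k i j) c

end Symm

section Fields

variable {n : ℕ} {U : Set (Fin n → ℝ)} {g : (Fin n → ℝ) → Matrix (Fin n) (Fin n) ℝ}
  {Xh' : Fin n → (Fin n → ℝ) → ℝ} {Xv' : Fin n → Pt n → ℝ} {p : Pt n}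

lemma mkVF_fst (q : Pt n) : (mkVF g Xh' Xv' q).1 = fun k => Xh' k q.1 := by
  funext k
  simp [mkVF, XH, XV, Prod.fst_sum, Finset.sum_apply, Pi.single_apply, mul_ite]

lemma mkVF_snd (q : Pt n) : (mkVF g Xh' Xv' q).2
    = fun m => Xv' m q - ∑ h, ∑ a, Xh' h q.1 * (q.2 a * Gam g m a h q.1) := by
  funext m
  simp [mkVF, XH, XV, Prod.snd_sum, Finset.sum_apply, Pi.single_apply, mul_ite,
    Finset.mul_sum]
  ring

lemma fderiv_proj_fst {W : Pt n → Pt n} (hW : DifferentiableAt ℝ W p) (v : Pt n) (k : Fin n) :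
    (fderiv ℝ W p v).1 k = fderiv ℝ (fun q => (W q).1 k) p v := by
  set L : Pt n →L[ℝ] ℝ := (ContinuousLinearMap.proj k).comp
    (ContinuousLinearMap.fst ℝ (Fin n → ℝ) (Fin n → ℝ)) with hL
  have h := (L.hasFDerivAt.comp p hW.hasFDerivAt).fderiv
  rw [show (fun q => (W q).1 k) = ⇑L ∘ W from rfl, h]
  rfl

lemma fderiv_proj_snd {W : Pt n → Pt n} (hW : DifferentiableAt ℝ W p) (v : Pt n) (k : Fin n) :
    (fderiv ℝ W p v).2 k = fderiv ℝ (fun q => (W q).2 k) p v := by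
  set L : Pt n →L[ℝ] ℝ := (ContinuousLinearMap.proj k).comp
    (ContinuousLinearMap.snd ℝ (Fin n → ℝ) (Fin n → ℝ)) with hL
  have h := (L.hasFDerivAt.comp p hW.hasFDerivAt).fderiv
  rw [show (fun q => (W q).2 k) = ⇑L ∘ W from rfl, h]
  rfl

end Fields

section Brackets

variable {n : ℕ} {U : Set (Fin n → ℝ)} {g : (Fin n → ℝ) → Matrix (Fin n) (Fin n) ℝ}
  {Xh' : Fin n → (Fin n → ℝ) → ℝ} {Xv' : Fin n → Pt n → ℝ} {p : Pt n}

variable (hU : IsOpen U) (hg : IsMetric U g) (hX : SmoothComponents U Xh' Xv')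
  (hp : p.1 ∈ U)

include hU hg hX hp

lemma diffXv (m : Fin n) : DifferentiableAt ℝ (Xv' m) p :=
  ((hX.2 m).contDiffAt ((hU.prod isOpen_univ).mem_nhds
    (Set.mk_mem_prod hp (Set.mem_univ _)))).differentiableAt (by simp)

lemma diffXh (h : Fin n) : DifferentiableAt ℝ (Xh' h) p.1 :=
  ((hX.1 h).contDiffAt (hU.mem_nhds hp)).differentiableAt (by simp)

lemma diffT (h a m : Fin n) :
    DifferentiableAt ℝ (fun q : Pt n => Xh' h q.1 * (q.2 a * Gam g m a h q.1)) p :=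
  (diff_comp_fst (diffXh hU hg hX hp h)).mul
    ((diff_snd_app a).mul (diff_comp_fst (Gamdiff hU hg hp m a h)))

lemma fderivT (h a m : Fin n) (v : Pt n) :
    fderiv ℝ (fun q : Pt n => Xh' h q.1 * (q.2 a * Gam g m a h q.1)) p v
    = (∑ k, v.1 k * pd k (Xh' h) p.1) * (p.2 a * Gam g m a h p.1)
      + Xh' h p.1 * (v.2 a * Gam g m a h p.1
          + p.2 a * ∑ k, v.1 k * pd k (Gam g m a h) p.1) := by
  rw [fderiv_fun_mul (diff_comp_fst (diffXh hU hg hX hp h))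
    ((diff_snd_app a).fun_mul (diff_comp_fst (Gamdiff hU hg hp m a h)))]
  rw [ContinuousLinearMap.add_apply, ContinuousLinearMap.smul_apply,
    ContinuousLinearMap.smul_apply, smul_eq_mul, smul_eq_mul]
  rw [fderiv_fun_mul (diff_snd_app a) (diff_comp_fst (Gamdiff hU hg hp m a h))]
  rw [ContinuousLinearMap.add_apply, ContinuousLinearMap.smul_apply,
    ContinuousLinearMap.smul_apply, smul_eq_mul, smul_eq_mul]
  rw [fderiv_comp_fst (diffXh hU hg hX hp h), fderiv_comp_fst (Gamdiff hU hg hp m a h),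
    fderiv_snd_app]
  ring

lemma diffX2 (m : Fin n) :
    DifferentiableAt ℝ
      (fun q : Pt n => Xv' m q - ∑ h, ∑ a, Xh' h q.1 * (q.2 a * Gam g m a h q.1)) p :=
  (diffXv hU hg hX hp m).sub
    (DifferentiableAt.fun_sum fun h _ => DifferentiableAt.fun_sum fun a _ => diffT hU hg hX hp h a m)

lemma fderivX2 (m : Fin n) (v : Pt n) :
    fderiv ℝ (fun q : Pt n => Xv' m q - ∑ h, ∑ a, Xh' h q.1 * (q.2 a * Gam g m a h q.1)) p v
    = fderiv ℝ (Xv' m) p v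
      - ∑ h, ∑ a, ((∑ k, v.1 k * pd k (Xh' h) p.1) * (p.2 a * Gam g m a h p.1)
          + Xh' h p.1 * (v.2 a * Gam g m a h p.1
              + p.2 a * ∑ k, v.1 k * pd k (Gam g m a h) p.1)) := by
  rw [fderiv_fun_sub (diffXv hU hg hX hp m)
    (DifferentiableAt.fun_sum fun h _ => DifferentiableAt.fun_sum fun a _ => diffT hU hg hX hp h a m)]
  rw [ContinuousLinearMap.sub_apply]
  congr 1
  rw [fderiv_fun_sum fun h _ => DifferentiableAt.fun_sum fun a _ => diffT hU hg hX hp h a m]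
  rw [ContinuousLinearMap.sum_apply]
  refine Finset.sum_congr rfl fun h _ => ?_
  rw [fderiv_fun_sum fun a _ => diffT hU hg hX hp h a m, ContinuousLinearMap.sum_apply]
  exact Finset.sum_congr rfl fun a _ => fderivT hU hg hX hp h a m v

lemma diffXH2 (i m : Fin n) :
    DifferentiableAt ℝ (fun q : Pt n => -∑ a, q.2 a * Gam g m a i q.1) p :=
  (DifferentiableAt.fun_sum fun a _ =>
    (diff_snd_app a).mul (diff_comp_fst (Gamdiff hU hg hp m a i))).neg

lemma fderivXH2 (i m : Fin n) (v : Pt n) :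
    fderiv ℝ (fun q : Pt n => -∑ a, q.2 a * Gam g m a i q.1) p v
    = -∑ a, (v.2 a * Gam g m a i p.1
        + p.2 a * ∑ k, v.1 k * pd k (Gam g m a i) p.1) := by
  rw [fderiv_fun_neg, ContinuousLinearMap.neg_apply]
  congr 1
  rw [fderiv_fun_sum fun a _ => (diff_snd_app a).fun_mul (diff_comp_fst (Gamdiff hU hg hp m a i)),
    ContinuousLinearMap.sum_apply]
  refine Finset.sum_congr rfl fun a _ => ?_
  rw [fderiv_fun_mul (diff_snd_app a) (diff_comp_fst (Gamdiff hU hg hp m a i)),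
    ContinuousLinearMap.add_apply, ContinuousLinearMap.smul_apply,
    ContinuousLinearMap.smul_apply, smul_eq_mul, smul_eq_mul,
    fderiv_comp_fst (Gamdiff hU hg hp m a i), fderiv_snd_app]
  ring

lemma diffX : DifferentiableAt ℝ (mkVF g Xh' Xv') p := by
  have hfun : mkVF g Xh' Xv' = fun q : Pt n =>
      ((fun k => Xh' k q.1 : Fin n → ℝ),
        (fun m => Xv' m q - ∑ h, ∑ a, Xh' h q.1 * (q.2 a * Gam g m a h q.1) : Fin n → ℝ)) :=
    funext fun q => Prod.ext (mkVF_fst q) (mkVF_snd q)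
  rw [hfun]
  refine DifferentiableAt.prodMk ?_ ?_
  · exact differentiableAt_pi.2 fun k => diff_comp_fst (diffXh hU hg hX hp k)
  · exact differentiableAt_pi.2 fun m => diffX2 hU hg hX hp m

lemma diffXH (i : Fin n) : DifferentiableAt ℝ (XH g i) p := by
  refine DifferentiableAt.prodMk (differentiableAt_const _) ?_
  exact differentiableAt_pi.2 fun m => diffXH2 hU hg hX hp i m

end Brackets

section Lie

variable {n : ℕ} {U : Set (Fin n → ℝ)} {g : (Fin n → ℝ) → Matrix (Fin n) (Fin n) ℝ}
  {Xh' : Fin n → (Fin n → ℝ) → ℝ} {Xv' : Fin n → Pt n → ℝ} {p : Pt n}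

lemma ver_XH (q : Pt n) (j m : Fin n) : ver g q (XH g j q) m = 0 := by
  simp [ver, XH, Pi.single_apply, mul_ite]

lemma ver_XV (q : Pt n) (i m : Fin n) : ver g q (XV i q) m = (Pi.single i 1 : Fin n → ℝ) m := by
  simp [ver, XV]

lemma g2_XH_right (q v : Pt n) (j : Fin n) :
    g2 g q v (XH g j q) = ∑ m, g q.1 j m * ver g q v m := by
  simp only [g2, ver_XH, mul_zero, zero_add, add_zero, zero_mul]
  rw [Finset.sum_comm]
  simp [XH, Pi.single_apply, ite_mul, mul_ite]

lemma g2_XH_left (q w : Pt n) (i : Fin n) :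
    g2 g q (XH g i q) w = ∑ m, g q.1 i m * ver g q w m := by
  simp only [g2, ver_XH, mul_zero, zero_add, add_zero, zero_mul]
  simp [XH, Pi.single_apply, ite_mul, mul_ite]

lemma g2_XV_left (q w : Pt n) (i : Fin n) :
    g2 g q (XV i q) w = ∑ b, g q.1 b i * w.1 b := by
  simp only [g2, ver_XV]
  simp [XV, Pi.single_apply, ite_mul, mul_ite, Finset.sum_comm (γ := Fin n)]

lemma g2_XV_right (q v : Pt n) (j : Fin n) :
    g2 g q v (XV j q) = ∑ b, g q.1 b j * v.1 b := by
  simp only [g2, ver_XV]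
  simp [XV, Pi.single_apply, ite_mul, mul_ite]

variable (hU : IsOpen U) (hg : IsMetric U g) (hX : SmoothComponents U Xh' Xv')
  (hp : p.1 ∈ U)

include hU hg hX hp

lemma lie_XH_fst (i k : Fin n) :
    (lie (mkVF g Xh' Xv') (XH g i) p).1 k = -(pd i (Xh' k) p.1) := by
  have hA : (fderiv ℝ (XH g i) p (mkVF g Xh' Xv' p)).1 k = 0 := by
    rw [fderiv_proj_fst (diffXH hU hg hX hp i)]
    rw [show (fun q : Pt n => (XH g i q).1 k) = fun _ => (Pi.single i 1 : Fin n → ℝ) k from rfl]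
    rw [fderiv_fun_const]
    rfl
  have hB : (fderiv ℝ (mkVF g Xh' Xv') p (XH g i p)).1 k = pd i (Xh' k) p.1 := by
    rw [fderiv_proj_fst (diffX hU hg hX hp)]
    rw [show (fun q : Pt n => (mkVF g Xh' Xv' q).1 k) = fun q : Pt n => Xh' k q.1 from
      funext fun q => congrFun (mkVF_fst q) k]
    rw [fderiv_comp_fst (diffXh hU hg hX hp k)]
    rw [show (XH g i p).1 = (Pi.single i 1 : Fin n → ℝ) from rfl]
    exact sum_single_mul' i _
  show (fderiv ℝ (XH g i) p (mkVF g Xh' Xv' p)).1 k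
      - (fderiv ℝ (mkVF g Xh' Xv') p (XH g i p)).1 k = -(pd i (Xh' k) p.1)
  rw [hA, hB]; ring

lemma lie_XH_snd (i m : Fin n) :
    (lie (mkVF g Xh' Xv') (XH g i) p).2 m
    = (-∑ a, ((Xv' a p - ∑ h, ∑ b, Xh' h p.1 * (p.2 b * Gam g a b h p.1)) * Gam g m a i p.1
          + p.2 a * ∑ c, Xh' c p.1 * pd c (Gam g m a i) p.1))
      - (fderiv ℝ (Xv' m) p (XH g i p)
         - ∑ h, ∑ b, (pd i (Xh' h) p.1 * (p.2 b * Gam g m b h p.1)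
            + Xh' h p.1 * ((-∑ c, p.2 c * Gam g b c i p.1) * Gam g m b h p.1
                + p.2 b * pd i (Gam g m b h) p.1))) := by
  have hA : (fderiv ℝ (XH g i) p (mkVF g Xh' Xv' p)).2 m
      = -∑ a, ((Xv' a p - ∑ h, ∑ b, Xh' h p.1 * (p.2 b * Gam g a b h p.1)) * Gam g m a i p.1
          + p.2 a * ∑ c, Xh' c p.1 * pd c (Gam g m a i) p.1) := by
    rw [fderiv_proj_snd (diffXH hU hg hX hp i)]
    rw [show (fun q : Pt n => (XH g i q).2 m)
        = fun q : Pt n => -∑ a, q.2 a * Gam g m a i q.1 from rfl]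
    rw [fderivXH2 hU hg hX hp i m]
    congr 1
    refine Finset.sum_congr rfl fun a _ => ?_
    rw [show (mkVF g Xh' Xv' p).2 a
        = Xv' a p - ∑ h, ∑ b, Xh' h p.1 * (p.2 b * Gam g a b h p.1) from
      congrFun (mkVF_snd p) a]
    congr 1
    congr 1
    refine Finset.sum_congr rfl fun c _ => ?_
    rw [show (mkVF g Xh' Xv' p).1 c = Xh' c p.1 from congrFun (mkVF_fst p) c]
  have hB : (fderiv ℝ (mkVF g Xh' Xv') p (XH g i p)).2 m
      = fderiv ℝ (Xv' m) p (XH g i p)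
        - ∑ h, ∑ b, (pd i (Xh' h) p.1 * (p.2 b * Gam g m b h p.1)
            + Xh' h p.1 * ((-∑ c, p.2 c * Gam g b c i p.1) * Gam g m b h p.1
                + p.2 b * pd i (Gam g m b h) p.1)) := by
    rw [fderiv_proj_snd (diffX hU hg hX hp)]
    rw [show (fun q : Pt n => (mkVF g Xh' Xv' q).2 m)
        = fun q : Pt n => Xv' m q - ∑ h, ∑ a, Xh' h q.1 * (q.2 a * Gam g m a h q.1) from
      funext fun q => congrFun (mkVF_snd q) m]
    rw [fderivX2 hU hg hX hp m]
    congr 1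
    refine Finset.sum_congr rfl fun h _ => ?_
    refine Finset.sum_congr rfl fun b _ => ?_
    rw [show (XH g i p).1 = (Pi.single i 1 : Fin n → ℝ) from rfl]
    rw [sum_single_mul' i (fun k => pd k (Xh' h) p.1)]
    rw [sum_single_mul' i (fun k => pd k (Gam g m b h) p.1)]
    rw [show (XH g i p).2 b = -∑ c, p.2 c * Gam g b c i p.1 from rfl]
  show (fderiv ℝ (XH g i) p (mkVF g Xh' Xv' p)).2 m
      - (fderiv ℝ (mkVF g Xh' Xv') p (XH g i p)).2 m = _
  rw [hA, hB]

lemma lie_XV_fst (i k : Fin n) :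
    (lie (mkVF g Xh' Xv') (XV i) p).1 k = 0 := by
  have hA : (fderiv ℝ (XV i : Pt n → Pt n) p (mkVF g Xh' Xv' p)).1 k = 0 := by
    rw [show (XV i : Pt n → Pt n)
        = fun _ : Pt n => ((0 : Fin n → ℝ), (Pi.single i 1 : Fin n → ℝ)) from rfl]
    rw [fderiv_fun_const]
    rfl
  have hB : (fderiv ℝ (mkVF g Xh' Xv') p (XV i p)).1 k = 0 := by
    rw [fderiv_proj_fst (diffX hU hg hX hp)]
    rw [show (fun q : Pt n => (mkVF g Xh' Xv' q).1 k) = fun q : Pt n => Xh' k q.1 from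
      funext fun q => congrFun (mkVF_fst q) k]
    rw [fderiv_comp_fst (diffXh hU hg hX hp k)]
    simp [XV]
  show (fderiv ℝ (XV i : Pt n → Pt n) p (mkVF g Xh' Xv' p)).1 k
      - (fderiv ℝ (mkVF g Xh' Xv') p (XV i p)).1 k = 0
  rw [hA, hB]; ring

lemma lie_XV_snd (i m : Fin n) :
    (lie (mkVF g Xh' Xv') (XV i) p).2 m
    = ∑ h, Xh' h p.1 * Gam g m i h p.1 - fderiv ℝ (Xv' m) p (XV i p) := by
  have hA : (fderiv ℝ (XV i : Pt n → Pt n) p (mkVF g Xh' Xv' p)).2 m = 0 := by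
    rw [show (XV i : Pt n → Pt n)
        = fun _ : Pt n => ((0 : Fin n → ℝ), (Pi.single i 1 : Fin n → ℝ)) from rfl]
    rw [fderiv_fun_const]
    rfl
  have hB : (fderiv ℝ (mkVF g Xh' Xv') p (XV i p)).2 m
      = fderiv ℝ (Xv' m) p (XV i p) - ∑ h, Xh' h p.1 * Gam g m i h p.1 := by
    rw [fderiv_proj_snd (diffX hU hg hX hp)]
    rw [show (fun q : Pt n => (mkVF g Xh' Xv' q).2 m)
        = fun q : Pt n => Xv' m q - ∑ h, ∑ a, Xh' h q.1 * (q.2 a * Gam g m a h q.1) from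
      funext fun q => congrFun (mkVF_snd q) m]
    rw [fderivX2 hU hg hX hp m]
    congr 1
    refine Finset.sum_congr rfl fun h _ => ?_
    rw [show (XV i p).1 = (0 : Fin n → ℝ) from rfl,
      show (XV i p).2 = (Pi.single i 1 : Fin n → ℝ) from rfl]
    simp [Pi.single_apply, ite_mul, mul_ite]
  show (fderiv ℝ (XV i : Pt n → Pt n) p (mkVF g Xh' Xv' p)).2 m
      - (fderiv ℝ (mkVF g Xh' Xv') p (XV i p)).2 m = _
  rw [hA, hB]; ring

end Lie

section VerB
variable {n : ℕ} {U : Set (Fin n → ℝ)} {g : (Fin n → ℝ) → Matrix (Fin n) (Fin n) ℝ}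
  {Xh' : Fin n → (Fin n → ℝ) → ℝ} {Xv' : Fin n → Pt n → ℝ} {p : Pt n}

lemma sum3_perm (f : Fin n → Fin n → Fin n → ℝ) :
    ∑ a, ∑ b, ∑ c, f a b c = ∑ a, ∑ b, ∑ c, f c b a :=
  calc ∑ a, ∑ b, ∑ c, f a b c
      = ∑ b, ∑ a, ∑ c, f a b c := Finset.sum_comm
    _ = ∑ b, ∑ c, ∑ a, f a b c := Finset.sum_congr rfl fun _ _ => Finset.sum_comm
    _ = ∑ c, ∑ b, ∑ a, f a b c := Finset.sum_comm

lemma sum3_cycle (f : Fin n → Fin n → Fin n → ℝ) :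
    ∑ a, ∑ b, ∑ c, f a b c = ∑ c, ∑ a, ∑ b, f a b c :=
  calc ∑ a, ∑ b, ∑ c, f a b c
      = ∑ a, ∑ c, ∑ b, f a b c := Finset.sum_congr rfl fun _ _ => Finset.sum_comm
    _ = ∑ c, ∑ a, ∑ b, f a b c := Finset.sum_comm

variable (hU : IsOpen U) (hg : IsMetric U g) (hX : SmoothComponents U Xh' Xv')
  (hp : p.1 ∈ U)
include hU hg hX hp

lemma verB (i m : Fin n) :
    ver g p (lie (mkVF g Xh' Xv') (XH g i) p) m
    = (∑ b, ∑ c, p.2 b * Xh' c p.1 * Curv g i c b m p.1)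
      - (∑ b, Xv' b p * Gam g m b i p.1) - fderiv ℝ (Xv' m) p (XH g i p) := by
  simp only [ver]
  rw [lie_XH_snd hU hg hX hp i m]
  simp only [lie_XH_fst hU hg hX hp i]
  simp only [Curv]
  simp only [sub_mul, add_mul, neg_mul, mul_neg, mul_add, mul_sub, Finset.sum_mul,
    Finset.mul_sum, Finset.sum_add_distrib, Finset.sum_sub_distrib, neg_neg,
    Finset.sum_neg_distrib, sub_eq_add_neg, neg_add]
  have hA2 : ∑ x : Fin n, ∑ x1 : Fin n, ∑ i1 : Fin n,
        Xh' x1 p.1 * (p.2 i1 * Gam g x i1 x1 p.1) * Gam g m x i p.1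
      = ∑ x : Fin n, ∑ x1 : Fin n, ∑ i1 : Fin n,
        p.2 x * Xh' x1 p.1 * (Gam g m i i1 p.1 * Gam g i1 x1 x p.1) := by
    rw [sum3_perm (fun x x1 i1 => Xh' x1 p.1 * (p.2 i1 * Gam g x i1 x1 p.1) * Gam g m x i p.1)]
    refine Finset.sum_congr rfl fun x _ => Finset.sum_congr rfl fun x1 _ =>
      Finset.sum_congr rfl fun i1 _ => ?_
    rw [Gam_symm_s8 hU hg hp m i1 i, Gam_symm_s8 hU hg hp i1 x x1]
    ring
  have hA3 : ∑ x : Fin n, ∑ i1 : Fin n, p.2 x * (Xh' i1 p.1 * pd i1 (Gam g m x i) p.1)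
      = ∑ x : Fin n, ∑ x1 : Fin n, p.2 x * Xh' x1 p.1 * pd x1 (Gam g m i x) p.1 := by
    refine Finset.sum_congr rfl fun x _ => Finset.sum_congr rfl fun i1 _ => ?_
    rw [pd_Gam_symm_s8 hU hg hp i1 m x i]
    ring
  have hA5 : ∑ x : Fin n, ∑ x1 : Fin n, p.2 x * Gam g m x x1 p.1 * pd i (Xh' x1) p.1
      = ∑ x : Fin n, ∑ x1 : Fin n, pd i (Xh' x) p.1 * (p.2 x1 * Gam g m x1 x p.1) := by
    rw [Finset.sum_comm]
    refine Finset.sum_congr rfl fun x _ => Finset.sum_congr rfl fun x1 _ => ?_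
    ring
  have hA6 : ∑ x : Fin n, ∑ x1 : Fin n, ∑ i1 : Fin n,
        Xh' x p.1 * (p.2 i1 * Gam g x1 i1 i p.1 * Gam g m x1 x p.1)
      = ∑ x : Fin n, ∑ x1 : Fin n, ∑ i1 : Fin n,
        p.2 x * Xh' x1 p.1 * (Gam g m x1 i1 p.1 * Gam g i1 i x p.1) := by
    rw [sum3_cycle (fun x x1 i1 => Xh' x p.1 * (p.2 i1 * Gam g x1 i1 i p.1 * Gam g m x1 x p.1))]
    refine Finset.sum_congr rfl fun x _ => Finset.sum_congr rfl fun x1 _ =>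
      Finset.sum_congr rfl fun i1 _ => ?_
    rw [Gam_symm_s8 hU hg hp m i1 x1, Gam_symm_s8 hU hg hp i1 x i]
    ring
  have hA7 : ∑ x : Fin n, ∑ x1 : Fin n, Xh' x p.1 * (p.2 x1 * pd i (Gam g m x1 x) p.1)
      = ∑ x : Fin n, ∑ x1 : Fin n, p.2 x * Xh' x1 p.1 * pd i (Gam g m x1 x) p.1 := by
    rw [Finset.sum_comm]
    refine Finset.sum_congr rfl fun x _ => Finset.sum_congr rfl fun x1 _ => ?_
    rw [pd_Gam_symm_s8 hU hg hp i m x x1]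
    ring
  rw [hA2, hA3, hA5, hA6, hA7]
  ring

end VerB

/-- For a fiber-preserving vector field `X` inducing `V` on `U`, with
`C_i^m = Σ_{b,c} y^b X^c K_{icb}{}^m − Σ_b X^b̄ Γ^m_{bi} − X_i(X^m̄)`:
`(L_X g₂)(X_i,X_j) = −Σ_m (g_{jm} C_i^m + g_{im} C_j^m)`,
`(L_X g₂)(X_ī,X_j) = (L_V g)_{ij} − Σ_m g_{jm} ∇_i V^m + Σ_m g_{jm} ∂X^m̄/∂y^i`, and
`(L_X g₂)(X_ī,X_j̄) = 0`. -/
theorem lieDer_g2 (n : ℕ) (hn : 1 ≤ n) (U : Set (Fin n → ℝ)) (hU : IsOpen U)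
    (g : (Fin n → ℝ) → Matrix (Fin n) (Fin n) ℝ) (hg : IsMetric U g)
    (Xh' : Fin n → (Fin n → ℝ) → ℝ) (Xv' : Fin n → Pt n → ℝ)
    (hX : SmoothComponents U Xh' Xv')
    (C : Fin n → Fin n → Pt n → ℝ)
    (hC : ∀ i m q, C i m q
      = (∑ b, ∑ c, q.2 b * Xh' c q.1 * Curv g i c b m q.1)
        - (∑ b, Xv' b q * Gam g m b i q.1) - dirD (XH g i) (Xv' m) q)
    (i j : Fin n) (p : Pt n) (hp : p.1 ∈ U) :
    lieDer (mkVF g Xh' Xv') (g2 g) (XH g i) (XH g j) p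
        = -∑ m, (g p.1 j m * C i m p + g p.1 i m * C j m p) ∧
      lieDer (mkVF g Xh' Xv') (g2 g) (XV i) (XH g j) p
        = lieG g Xh' i j p.1 - (∑ m, g p.1 j m * covD g Xh' i m p.1)
            + ∑ m, g p.1 j m * dirD (XV i) (Xv' m) p ∧
      lieDer (mkVF g Xh' Xv') (g2 g) (XV i) (XV j) p = 0 := by
  refine ⟨?_, ?_, ?_⟩
  · -- eq 1
    have t1 : dirD (mkVF g Xh' Xv') (fun q => g2 g q (XH g i q) (XH g j q)) p = 0 := by
      have hfun : (fun q => g2 g q (XH g i q) (XH g j q)) = fun _ : Pt n => (0 : ℝ) :=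
        funext fun q => by rw [g2_XH_right]; simp [ver_XH]
      show fderiv ℝ (fun q => g2 g q (XH g i q) (XH g j q)) p (mkVF g Xh' Xv' p) = 0
      rw [hfun, fderiv_fun_const]
      rfl
    have t2 : g2 g p (lie (mkVF g Xh' Xv') (XH g i) p) (XH g j p)
        = ∑ m, g p.1 j m * C i m p := by
      rw [g2_XH_right]
      refine Finset.sum_congr rfl fun m _ => ?_
      rw [verB hU hg hX hp i m, hC i m p]
      rfl
    have t3 : g2 g p (XH g i p) (lie (mkVF g Xh' Xv') (XH g j) p)
        = ∑ m, g p.1 i m * C j m p := by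
      rw [g2_XH_left]
      refine Finset.sum_congr rfl fun m _ => ?_
      rw [verB hU hg hX hp j m, hC j m p]
      rfl
    show dirD (mkVF g Xh' Xv') (fun q => g2 g q (XH g i q) (XH g j q)) p
        - g2 g p (lie (mkVF g Xh' Xv') (XH g i) p) (XH g j p)
        - g2 g p (XH g i p) (lie (mkVF g Xh' Xv') (XH g j) p) = _
    rw [t1, t2, t3, Finset.sum_add_distrib]
    ring
  · -- eq 2
    have t1 : dirD (mkVF g Xh' Xv') (fun q => g2 g q (XV i q) (XH g j q)) p
        = ∑ a, Xh' a p.1 * pd a (fun z => g z j i) p.1 := by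
      have hfun : (fun q => g2 g q (XV i q) (XH g j q)) = fun q : Pt n => g q.1 j i :=
        funext fun q => by
          rw [g2_XV_left]
          rw [show (XH g j q).1 = (Pi.single j 1 : Fin n → ℝ) from rfl]
          simp [Pi.single_apply, mul_ite]
      show fderiv ℝ (fun q => g2 g q (XV i q) (XH g j q)) p (mkVF g Xh' Xv' p) = _
      rw [hfun, fderiv_comp_fst (gdiff hU hg hp j i)]
      refine Finset.sum_congr rfl fun k _ => ?_
      rw [show (mkVF g Xh' Xv' p).1 k = Xh' k p.1 from congrFun (mkVF_fst p) k]
    have t2 : g2 g p (lie (mkVF g Xh' Xv') (XV i) p) (XH g j p)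
        = ∑ m, g p.1 j m * (∑ h, Xh' h p.1 * Gam g m i h p.1
            - fderiv ℝ (Xv' m) p (XV i p)) := by
      rw [g2_XH_right]
      refine Finset.sum_congr rfl fun m _ => ?_
      simp only [ver, lie_XV_fst hU hg hX hp i, lie_XV_snd hU hg hX hp i, mul_zero,
        Finset.sum_const_zero, add_zero]
    have t3 : g2 g p (XV i p) (lie (mkVF g Xh' Xv') (XH g j) p)
        = -∑ b, g p.1 b i * pd j (Xh' b) p.1 := by
      rw [g2_XV_left]
      simp only [lie_XH_fst hU hg hX hp j, mul_neg]
      rw [Finset.sum_neg_distrib]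
    show dirD (mkVF g Xh' Xv') (fun q => g2 g q (XV i q) (XH g j q)) p
        - g2 g p (lie (mkVF g Xh' Xv') (XV i) p) (XH g j p)
        - g2 g p (XV i p) (lie (mkVF g Xh' Xv') (XH g j) p) = _
    rw [t1, t2, t3]
    simp only [lieG, covD, dirD]
    simp only [mul_sub, mul_add, mul_neg, Finset.sum_add_distrib, Finset.sum_sub_distrib,
      Finset.mul_sum, sub_eq_add_neg, neg_add, neg_neg, Finset.sum_neg_distrib]
    have k1 : ∑ a, Xh' a p.1 * pd a (fun z => g z j i) p.1
        = ∑ a, Xh' a p.1 * pd a (fun z => g z i j) p.1 :=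
      Finset.sum_congr rfl fun a _ => by rw [pd_g_symm hU hg hp a j i]
    have k2 : ∑ b, g p.1 b i * pd j (Xh' b) p.1 = ∑ b, pd j (Xh' b) p.1 * g p.1 i b :=
      Finset.sum_congr rfl fun b _ => by rw [g_symm hg hp b i]; ring
    have k3 : ∑ x, pd i (Xh' x) p.1 * g p.1 x j = ∑ x, g p.1 j x * pd i (Xh' x) p.1 :=
      Finset.sum_congr rfl fun x _ => by rw [g_symm hg hp x j]; ring
    have k4 : ∑ x : Fin n, ∑ i1 : Fin n, g p.1 j x * (Xh' i1 p.1 * Gam g x i i1 p.1)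
        = ∑ x : Fin n, ∑ i1 : Fin n, g p.1 j x * (Gam g x i i1 p.1 * Xh' i1 p.1) :=
      Finset.sum_congr rfl fun x _ => Finset.sum_congr rfl fun i1 _ => by ring
    rw [k1, k2, k3, k4]
    ring
  · -- eq 3
    have t1 : dirD (mkVF g Xh' Xv') (fun q => g2 g q (XV i q) (XV j q)) p = 0 := by
      have hfun : (fun q => g2 g q (XV i q) (XV j q)) = fun _ : Pt n => (0 : ℝ) :=
        funext fun q => by
          rw [g2_XV_left]
          rw [show (XV j q).1 = (0 : Fin n → ℝ) from rfl]
          simp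
      show fderiv ℝ (fun q => g2 g q (XV i q) (XV j q)) p (mkVF g Xh' Xv' p) = 0
      rw [hfun, fderiv_fun_const]
      rfl
    have t2 : g2 g p (lie (mkVF g Xh' Xv') (XV i) p) (XV j p) = 0 := by
      rw [g2_XV_right]
      simp [lie_XV_fst hU hg hX hp i]
    have t3 : g2 g p (XV i p) (lie (mkVF g Xh' Xv') (XV j) p) = 0 := by
      rw [g2_XV_left]
      simp [lie_XV_fst hU hg hX hp j]
    show dirD (mkVF g Xh' Xv') (fun q => g2 g q (XV i q) (XV j q)) p
        - g2 g p (lie (mkVF g Xh' Xv') (XV i) p) (XV j p)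
        - g2 g p (XV i p) (lie (mkVF g Xh' Xv') (XV j) p) = 0
    rw [t1, t2, t3]
    ring

end TangentLift
end
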